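/- For every poset system S = (P, m, A) and every prime power q, k(P, m, A; q) = k(D(S), m, A; q), where D(S) is the poset obtained from P by deleting every relation (a, x) with a ∈ A, a ≺_P x ≺_P m, and A ∩ lb(x) = {a}. -/

import Mathlib

/-
Common framework: pattern posets, pattern algebras and pattern groups
(in the sense of Isaacs), the spaces `L_P(q)` realizing the dual of the pattern
algebra, the co-adjoint action, poset systems `(P, m, A)` and their orbit counts
`k(P, m, A; q)`, and combinatorial operations on pattern posets, following
"On Higman's conjecture" by Pak and Soffer.
-/

open Matrix

/-- A pattern poset on `{0,…,n-1}`: a strict partial order on `Fin n` that has the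
standard order of the integers as a linear extension. -/
structure PatternPoset (n : ℕ) where
  lt : Fin n → Fin n → Prop
  lt_trans : ∀ {i j k : Fin n}, lt i j → lt j k → lt i k
  lt_le : ∀ {i j : Fin n}, lt i j → (i : ℕ) < (j : ℕ)

namespace PatternPoset

variable {n : ℕ}

theorem lt_irrefl (P : PatternPoset n) (i : Fin n) : ¬ P.lt i i :=
  fun h => Nat.lt_irrefl _ (P.lt_le h)

theorem ne_of_lt (P : PatternPoset n) {i j : Fin n} (h : P.lt i j) : i ≠ j := by
  intro e; subst e; exact P.lt_irrefl i h

/-- The pattern algebra `𝒰_P(q)`, as a subspace of the `n × n` matrices: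
matrices supported on the cells `(i,j)` with `i ≺ j`. -/
def patternAlg (P : PatternPoset n) (F : Type*) [Field F] :
    Submodule F (Matrix (Fin n) (Fin n) F) where
  carrier := {X | ∀ i j : Fin n, ¬ P.lt i j → X i j = 0}
  add_mem' := by
    intro a b ha hb i j h
    simp [Matrix.add_apply, ha i j h, hb i j h]
  zero_mem' := by intro i j h; simp
  smul_mem' := by
    intro c a ha i j h
    simp [Matrix.smul_apply, ha i j h]

theorem mul_mem_patternAlg {P : PatternPoset n} {F : Type*} [Field F]
    {X Y : Matrix (Fin n) (Fin n) F} (hX : X ∈ P.patternAlg F) (hY : Y ∈ P.patternAlg F) :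
    X * Y ∈ P.patternAlg F := by
  intro i j h
  rw [Matrix.mul_apply]
  apply Finset.sum_eq_zero
  intro k _
  by_cases h1 : P.lt i k
  · by_cases h2 : P.lt k j
    · exact absurd (P.lt_trans h1 h2) h
    · rw [hY k j h2, mul_zero]
  · rw [hX i k h1, zero_mul]

theorem pow_apply_ne_zero {P : PatternPoset n} {F : Type*} [Field F]
    {X : Matrix (Fin n) (Fin n) F} (hX : X ∈ P.patternAlg F) :
    ∀ t (i j : Fin n), (X ^ t) i j ≠ 0 → (i : ℕ) + t ≤ (j : ℕ) := by
  intro t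
  induction t with
  | zero =>
    intro i j h
    rw [pow_zero] at h
    by_cases hij : i = j
    · subst hij; simp
    · exact absurd (Matrix.one_apply_ne hij) h
  | succ t ih =>
    intro i j h
    rw [pow_succ, Matrix.mul_apply] at h
    obtain ⟨k, -, hk⟩ := Finset.exists_ne_zero_of_sum_ne_zero h
    have h1 : (X ^ t) i k ≠ 0 := fun e => hk (by rw [e, zero_mul])
    have h2 : X k j ≠ 0 := fun e => hk (by rw [e, mul_zero])
    have h3 : P.lt k j := by by_contra hc; exact h2 (hX k j hc)
    have h4 := ih i k h1
    have h5 := P.lt_le h3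
    omega

theorem pow_card_eq_zero {P : PatternPoset n} {F : Type*} [Field F]
    {X : Matrix (Fin n) (Fin n) F} (hX : X ∈ P.patternAlg F) : X ^ n = 0 := by
  ext i j
  simp only [Matrix.zero_apply]
  by_contra h
  have h1 := pow_apply_ne_zero hX n i j h
  have h2 := j.isLt
  omega

theorem pow_succ_mem_patternAlg {P : PatternPoset n} {F : Type*} [Field F]
    {X : Matrix (Fin n) (Fin n) F} (hX : X ∈ P.patternAlg F) (t : ℕ) :
    X ^ (t + 1) ∈ P.patternAlg F := by
  induction t with
  | zero => simpa using hX
  | succ t ih => rw [pow_succ]; exact mul_mem_patternAlg ih hX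

theorem inv_sub_one_mem {P : PatternPoset n} {F : Type*} [Field F]
    {a : (Matrix (Fin n) (Fin n) F)ˣ}
    (ha : ((a : Matrix (Fin n) (Fin n) F) - 1) ∈ P.patternAlg F) :
    (((a⁻¹ : (Matrix (Fin n) (Fin n) F)ˣ) : Matrix (Fin n) (Fin n) F) - 1)
      ∈ P.patternAlg F := by
  rcases Nat.eq_zero_or_pos n with hn | hn
  · subst hn; intro i j _; exact i.elim0
  obtain ⟨m, rfl⟩ : ∃ m, n = m + 1 := ⟨n - 1, by omega⟩
  set X : Matrix (Fin (m + 1)) (Fin (m + 1)) F :=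
    (a : Matrix (Fin (m + 1)) (Fin (m + 1)) F) - 1 with hXdef
  have hXmem : -X ∈ P.patternAlg F := (P.patternAlg F).neg_mem ha
  have hXn : (-X) ^ (m + 1) = 0 := pow_card_eq_zero hXmem
  have key : (∑ t ∈ Finset.range (m + 1), (-X) ^ t) *
      (a : Matrix (Fin (m + 1)) (Fin (m + 1)) F) = 1 := by
    have hgeom := geom_sum_mul (-X) (m + 1)
    rw [hXn] at hgeom
    have ha' : (a : Matrix (Fin (m + 1)) (Fin (m + 1)) F) = -((-X) - 1) := by
      rw [hXdef]; abel
    rw [ha', mul_neg, hgeom]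
    simp
  have hinv : ((a⁻¹ : (Matrix (Fin (m + 1)) (Fin (m + 1)) F)ˣ) :
        Matrix (Fin (m + 1)) (Fin (m + 1)) F)
      = ∑ t ∈ Finset.range (m + 1), (-X) ^ t :=
    Units.inv_eq_of_mul_eq_one_left key
  rw [hinv]
  have hsplit : (∑ t ∈ Finset.range (m + 1), (-X) ^ t) - 1
      = ∑ t ∈ Finset.range m, (-X) ^ (t + 1) := by
    rw [Finset.sum_range_succ' (fun t => (-X) ^ t) m]
    simp
  rw [hsplit]
  exact Submodule.sum_mem _ (fun t _ => pow_succ_mem_patternAlg hXmem t)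

theorem entry_cases {P : PatternPoset n} {F : Type*} [Field F]
    {M : Matrix (Fin n) (Fin n) F} (hM : (M - 1) ∈ P.patternAlg F)
    {i k : Fin n} (h : M i k ≠ 0) : i = k ∨ P.lt i k := by
  by_contra hc
  push_neg at hc
  apply h
  have h1 := hM i k hc.2
  have h2 : (1 : Matrix (Fin n) (Fin n) F) i k = 0 := Matrix.one_apply_ne hc.1
  calc M i k = (M - 1) i k + (1 : Matrix (Fin n) (Fin n) F) i k := by
        simp [Matrix.sub_apply]
    _ = 0 := by rw [h1, h2, add_zero]

theorem conj_entry_zero {P : PatternPoset n} {F : Type*} [Field F]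
    {A B Y : Matrix (Fin n) (Fin n) F}
    (hA : (A - 1) ∈ P.patternAlg F) (hB : (B - 1) ∈ P.patternAlg F)
    (i j : Fin n)
    (hzero : ∀ k l : Fin n, (i = k ∨ P.lt i k) → (l = j ∨ P.lt l j) → Y k l = 0) :
    (A * Y * B) i j = 0 := by
  rw [Matrix.mul_apply]
  apply Finset.sum_eq_zero
  intro l _
  rw [Matrix.mul_apply, Finset.sum_mul]
  apply Finset.sum_eq_zero
  intro k _
  by_cases hAik : A i k = 0
  · rw [hAik, zero_mul, zero_mul]
  by_cases hBlj : B l j = 0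
  · rw [hBlj, mul_zero]
  rw [hzero k l (entry_cases hA hAik) (entry_cases hB hBlj), mul_zero, zero_mul]

/-- The pattern group `U_P(q) = {1 + X : X ∈ 𝒰_P(q)}`, as a subgroup of the units of the
matrix ring. -/
def patternGroup (P : PatternPoset n) (F : Type*) [Field F] :
    Subgroup (Matrix (Fin n) (Fin n) F)ˣ where
  carrier := {g | ((g : Matrix (Fin n) (Fin n) F) - 1) ∈ P.patternAlg F}
  one_mem' := by
    simp only [Set.mem_setOf_eq, Units.val_one, sub_self]
    exact (P.patternAlg F).zero_mem
  mul_mem' := by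
    intro a b ha hb
    simp only [Set.mem_setOf_eq, Units.val_mul] at *
    have h : (a : Matrix (Fin n) (Fin n) F) * b - 1 =
        ((a : Matrix (Fin n) (Fin n) F) - 1) * ((b : Matrix (Fin n) (Fin n) F) - 1)
          + (((a : Matrix (Fin n) (Fin n) F) - 1) + ((b : Matrix (Fin n) (Fin n) F) - 1)) := by
      noncomm_ring
    rw [h]
    exact (P.patternAlg F).add_mem (mul_mem_patternAlg ha hb) ((P.patternAlg F).add_mem ha hb)
  inv_mem' := fun ha => inv_sub_one_mem ha

/-- `k(P; q)`: the number of conjugacy classes of the pattern group `U_P(q)`. -/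
noncomputable def kOf (P : PatternPoset n) (F : Type*) [Field F] : ℕ :=
  Nat.card (ConjClasses (P.patternGroup F))

/-- The chain poset `C_n`, whose pattern group is the full unitriangular group `U_n(q)`. -/
def chainPoset (n : ℕ) : PatternPoset n where
  lt i j := (i : ℕ) < (j : ℕ)
  lt_trans := fun h1 h2 => Nat.lt_trans h1 h2
  lt_le := fun h => h

/-- The induced subposet `P − m`, obtained by deleting the element `m`. -/
def delete (P : PatternPoset (n + 1)) (m : Fin (n + 1)) : PatternPoset n where
  lt i j := P.lt (m.succAbove i) (m.succAbove j)
  lt_trans := fun h1 h2 => P.lt_trans h1 h2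
  lt_le := fun {i j} h => by
    have h2 : m.succAbove i < m.succAbove j := by
      rw [Fin.lt_def]; exact P.lt_le h
    exact Fin.lt_def.mp (Fin.succAbove_lt_succAbove_iff.mp h2)

/-- The dual poset `P*`, relabeled by `i ↦ n + 1 − i` so that the standard order is
again a linear extension. -/
def dual (P : PatternPoset n) : PatternPoset n where
  lt i j := P.lt j.rev i.rev
  lt_trans := fun h1 h2 => P.lt_trans h2 h1
  lt_le := fun {i j} h => by
    have h1 : j.rev < i.rev := by rw [Fin.lt_def]; exact P.lt_le h
    exact Fin.lt_def.mp (Fin.rev_lt_rev.mp h1)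

/-- The disjoint union `P ⨿ Q` of two pattern posets. -/
def disjUnion {m n : ℕ} (P : PatternPoset m) (Q : PatternPoset n) :
    PatternPoset (m + n) where
  lt x y :=
    match finSumFinEquiv.symm x, finSumFinEquiv.symm y with
    | Sum.inl a, Sum.inl b => P.lt a b
    | Sum.inr a, Sum.inr b => Q.lt a b
    | _, _ => False
  lt_trans := by
    intro i j k hij hjk
    rcases hi : finSumFinEquiv.symm i with a | a <;>
      rcases hj : finSumFinEquiv.symm j with b | b <;>
        rcases hk : finSumFinEquiv.symm k with c | c <;>
          simp only [hi, hj, hk] at hij hjk ⊢ <;>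
            first
              | exact P.lt_trans hij hjk
              | exact Q.lt_trans hij hjk
  lt_le := by
    intro i j h
    rcases hi : finSumFinEquiv.symm i with a | a <;>
      rcases hj : finSumFinEquiv.symm j with b | b <;>
        simp only [hi, hj] at h
    · have hi' : i = Fin.castAdd _ a := by
        rw [← finSumFinEquiv_apply_left, ← hi, Equiv.apply_symm_apply]
      have hj' : j = Fin.castAdd _ b := by
        rw [← finSumFinEquiv_apply_left, ← hj, Equiv.apply_symm_apply]
      rw [hi', hj']
      exact P.lt_le h
    · have hi' : i = Fin.natAdd _ a := by
        rw [← finSumFinEquiv_apply_right, ← hi, Equiv.apply_symm_apply]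
      have hj' : j = Fin.natAdd _ b := by
        rw [← finSumFinEquiv_apply_right, ← hj, Equiv.apply_symm_apply]
      rw [hi', hj']
      simpa using Q.lt_le h

/-- The subspace of matrices quotiented away in `L_P(q)`:
those vanishing on all cells `(i,j)` with `j ≺ i`. -/
def lowQuot (P : PatternPoset n) (F : Type*) [Field F] :
    Submodule F (Matrix (Fin n) (Fin n) F) where
  carrier := {X | ∀ i j : Fin n, P.lt j i → X i j = 0}
  add_mem' := by
    intro a b ha hb i j h
    simp [Matrix.add_apply, ha i j h, hb i j h]
  zero_mem' := by intro i j h; simp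
  smul_mem' := by
    intro c a ha i j h
    simp [Matrix.smul_apply, ha i j h]

/-- The space `L_P(q)`, realizing the dual `𝒰_P(q)*` as a quotient of the
space of all `n × n` matrices. -/
abbrev LSpace (P : PatternPoset n) (F : Type*) [Field F] :=
  Matrix (Fin n) (Fin n) F ⧸ P.lowQuot F

end PatternPoset

/-- Conjugation `X ↦ g X g⁻¹` by a unit, as a linear map on matrices. -/
def conjLin {n : ℕ} (F : Type*) [Field F] (g : (Matrix (Fin n) (Fin n) F)ˣ) :
    Matrix (Fin n) (Fin n) F →ₗ[F] Matrix (Fin n) (Fin n) F where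
  toFun X := (g : Matrix (Fin n) (Fin n) F) * X *
    ((g⁻¹ : (Matrix (Fin n) (Fin n) F)ˣ) : Matrix (Fin n) (Fin n) F)
  map_add' X Y := by rw [mul_add, add_mul]
  map_smul' c X := by rw [mul_smul_comm, smul_mul_assoc]; rfl

namespace PatternPoset

variable {n : ℕ}

/-- The co-adjoint action `K_g(X) = g X g⁻¹` of the pattern group on `L_P(q)`. -/
noncomputable def coadj (P : PatternPoset n) (F : Type*) [Field F]
    (g : P.patternGroup F) : P.LSpace F →ₗ[F] P.LSpace F :=
  Submodule.mapQ _ _ (conjLin F (g : (Matrix (Fin n) (Fin n) F)ˣ)) (by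
    intro Y hY
    simp only [Submodule.mem_comap]
    have hg : ((g : (Matrix (Fin n) (Fin n) F)ˣ) : Matrix (Fin n) (Fin n) F) - 1
        ∈ P.patternAlg F := g.2
    have hginv : (((g : (Matrix (Fin n) (Fin n) F)ˣ)⁻¹ : (Matrix (Fin n) (Fin n) F)ˣ) :
        Matrix (Fin n) (Fin n) F) - 1 ∈ P.patternAlg F := inv_sub_one_mem g.2
    intro i j hji
    apply conj_entry_zero hg hginv
    intro k l hik hlj
    apply hY k l
    rcases hik with rfl | hik <;> rcases hlj with rfl | hlj
    · exact hji
    · exact P.lt_trans hlj hji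
    · exact P.lt_trans hji hik
    · exact P.lt_trans (P.lt_trans hlj hji) hik)

/-- The poset `P^(m)`: the poset on the same ground set whose only relations
are `x ≺ m` for `x ≺_P m`. -/
def restrictTo (P : PatternPoset n) (m : Fin n) : PatternPoset n where
  lt x y := y = m ∧ P.lt x y
  lt_trans := fun h1 h2 => ⟨h2.1, P.lt_trans h1.2 h2.2⟩
  lt_le := fun h => P.lt_le h.2

/-- The canonical projection `π : L_P(q) → L_{P^(m)}(q)`. -/
noncomputable def projL (P : PatternPoset n) (m : Fin n) (F : Type*) [Field F] :
    P.LSpace F →ₗ[F] (P.restrictTo m).LSpace F :=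
  Submodule.mapQ _ _ LinearMap.id (by
    intro X hX
    simp only [Submodule.mem_comap, LinearMap.id_coe, id_eq]
    intro i j h
    exact hX i j h.2)

end PatternPoset

/-- The elementary transvection `E_{i,j}(α) = 1 + α e_{i,j}` as a unit of the matrix ring. -/
def transvectionUnit {n : ℕ} {F : Type*} [Field F] (i j : Fin n) (hij : i ≠ j) (α : F) :
    (Matrix (Fin n) (Fin n) F)ˣ where
  val := 1 + Matrix.single i j α
  inv := 1 + Matrix.single i j (-α)
  val_inv := by
    have h0 : Matrix.single i j α * Matrix.single i j (-α) = 0 :=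
      Matrix.single_mul_single_of_ne (h := hij.symm) ..
    have h1 : Matrix.single i j α + Matrix.single i j (-α) = 0 := by
      rw [← Matrix.single_add]; simp
    rw [add_mul, mul_add, mul_add, one_mul, mul_one, h0]
    rw [add_zero, add_assoc, one_mul, add_comm (Matrix.single i j (-α)), h1, add_zero]
  inv_val := by
    have h0 : Matrix.single i j (-α) * Matrix.single i j α = 0 :=
      Matrix.single_mul_single_of_ne (h := hij.symm) ..
    have h1 : Matrix.single i j (-α) + Matrix.single i j α = 0 := by
      rw [← Matrix.single_add]; simp
    rw [add_mul, mul_add, mul_add, one_mul, mul_one, h0]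
    rw [add_zero, add_assoc, one_mul, add_comm (Matrix.single i j α), h1, add_zero]

/-- A poset system `(P, m, A)`: a pattern poset `P`, a maximal element `m`,
and an anti-chain `A ⊆ lb(m)`. -/
structure PosetSystem (n : ℕ) where
  P : PatternPoset n
  m : Fin n
  m_max : ∀ x, ¬ P.lt m x
  A : Finset (Fin n)
  A_lb : ∀ a ∈ A, P.lt a m
  A_anti : ∀ a ∈ A, ∀ b ∈ A, ¬ P.lt a b

namespace PosetSystem

variable {n : ℕ}

/-- The element `1_A = Σ_{a ∈ A} e_{m,a}` of `L_{P^(m)}(q)`. -/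
noncomputable def oneA (S : PosetSystem n) (F : Type*) [Field F] :
    (S.P.restrictTo S.m).LSpace F :=
  Submodule.Quotient.mk (∑ a ∈ S.A, Matrix.single S.m a (1 : F))

/-- The action of `U_P(q)` on `L_{P^(m)}(q)` induced by the co-adjoint action. -/
noncomputable def coadjQ (S : PosetSystem n) (F : Type*) [Field F]
    (g : S.P.patternGroup F) :
    (S.P.restrictTo S.m).LSpace F →ₗ[F] (S.P.restrictTo S.m).LSpace F :=
  Submodule.mapQ _ _ (conjLin F (g : (Matrix (Fin n) (Fin n) F)ˣ)) (by
    intro Y hY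
    simp only [Submodule.mem_comap]
    have hg : ((g : (Matrix (Fin n) (Fin n) F)ˣ) : Matrix (Fin n) (Fin n) F) - 1
        ∈ S.P.patternAlg F := g.2
    have hginv : (((g : (Matrix (Fin n) (Fin n) F)ˣ)⁻¹ : (Matrix (Fin n) (Fin n) F)ˣ) :
        Matrix (Fin n) (Fin n) F) - 1 ∈ S.P.patternAlg F :=
      PatternPoset.inv_sub_one_mem g.2
    intro i j hji
    obtain ⟨him, hjilt⟩ := hji
    apply PatternPoset.conj_entry_zero hg hginv
    intro k l hik hlj
    have hk : k = S.m := by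
      rcases hik with rfl | hik
      · exact him
      · rw [him] at hik; exact absurd hik (S.m_max k)
    have hlm : S.P.lt l S.m := by
      rcases hlj with rfl | hlj
      · rw [← him]; exact hjilt
      · rw [him] at hjilt; exact S.P.lt_trans hlj hjilt
    subst hk
    exact hY S.m l ⟨rfl, hlm⟩)

/-- The stabilizer of `1_A` in `U_P(q)` for the induced action on `L_{P^(m)}(q)`. -/
noncomputable def stab (S : PosetSystem n) (F : Type*) [Field F] :
    Set (S.P.patternGroup F) :=
  {g | S.coadjQ F g (S.oneA F) = S.oneA F}

/-- The fiber `π⁻¹(1_A) ⊆ L_P(q)`. -/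
noncomputable def fiber (S : PosetSystem n) (F : Type*) [Field F] :
    Set (S.P.LSpace F) :=
  {X | S.P.projL S.m F X = S.oneA F}

/-- `k(P, m, A; q)`: the number of orbits of `Stab_{U_P(q)}(1_A)` acting on the fiber
`π⁻¹(1_A)` under the co-adjoint action, counted as the number of distinct orbit sets. -/
noncomputable def systemK (S : PosetSystem n) (F : Type*) [Field F] : ℕ :=
  Nat.card {O : Set (S.P.LSpace F) // ∃ X ∈ S.fiber F,
    O = {Y | ∃ g ∈ S.stab F, S.P.coadj F g X = Y}}

/-- The poset `D(S)`: delete from `P` every relation `(a, x)` with `a ∈ A`,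
`a ≺ x ≺ m`, and `A ∩ lb(x) = {a}`. -/
def D (S : PosetSystem n) : PatternPoset n where
  lt x y := S.P.lt x y ∧
    ¬ (x ∈ S.A ∧ S.P.lt y S.m ∧ ∀ b ∈ S.A, S.P.lt b y → b = x)
  lt_trans := by
    rintro i j k ⟨hij, hi⟩ ⟨hjk, -⟩
    refine ⟨S.P.lt_trans hij hjk, ?_⟩
    rintro ⟨hiA, hkm, huniq⟩
    exact hi ⟨hiA, S.P.lt_trans hjk hkm, fun b hb hbj => huniq b hb (S.P.lt_trans hbj hjk)⟩
  lt_le := fun h => S.P.lt_le h.1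

/-- `D(S)` together with the same `m` and `A`, as a poset system. -/
def DSys (S : PosetSystem n) : PosetSystem n where
  P := S.D
  m := S.m
  m_max := fun x h => S.m_max x h.1
  A := S.A
  A_lb := fun a ha => ⟨S.A_lb a ha, fun h => S.P.lt_irrefl S.m h.2.1⟩
  A_anti := fun a ha b hb h => S.A_anti a ha b hb h.1

end PosetSystem


/-!
The stabilizer of `1_A` already lies in `U_{D(S)}(q)`: for a deleted relation `a ≺ w`, the
entry `(m, w)` of the stabilizer condition reads `Σ_{b ∈ A} (g⁻¹)_{b,w} = 0`, and `a` is the only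
`b ∈ A` below `w`, so `(g⁻¹)_{a,w} = 0`. Hence both stabilizers are the same group of matrices,
and the projection `L_P(q) → L_{D(S)}(q)` maps orbits onto orbits and the fiber onto the fiber.
It is injective on orbits because its kernel, the cells `(w, a)` of deleted relations, is swept
out inside the fiber by column transvections `1 + c ⊗ e_m`: modulo the relations of `P`,
conjugating by one adds `c_w X_{m,b}` at `(w, b)`, and on the fiber `X_{m,b} = [b ∈ A]`.
-/

section ColumnTransvection

variable {ι R : Type*} [Fintype ι] [DecidableEq ι] [Ring R]

theorem vecMulVec_single_mul_self {m : ι} {c : ι → R} (hc : c m = 0) :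
    vecMulVec c (Pi.single m 1) * vecMulVec c (Pi.single m 1) = (0 : Matrix ι ι R) := by
  ext i j
  simp [vecMulVec_mul, single_vecMul, vecMulVec_apply, hc]

theorem conj_one_add_vecMulVec_single_apply {m : ι} (c : ι → R) (X : Matrix ι ι R)
    (i : ι) {j : ι} (hj : j ≠ m) :
    ((1 + vecMulVec c (Pi.single m 1)) * X * (1 - vecMulVec c (Pi.single m 1))) i j =
      X i j + c i * X m j := by
  simp [add_mul, mul_sub, mul_vecMulVec, vecMulVec_mul, single_vecMul, vecMulVec_apply, hj]

end ColumnTransvection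

namespace PatternPoset

variable {n : ℕ} {F : Type*} [Field F]

local notation "𝕄" => Matrix (Fin n) (Fin n) F

theorem ext {P Q : PatternPoset n} (h : P.lt = Q.lt) : P = Q := by
  cases P; cases Q; subst h; rfl

theorem apply_eq_one_apply_of_not_lt {P : PatternPoset n} {g : 𝕄} (hg : g - 1 ∈ P.patternAlg F)
    {i j : Fin n} (hij : ¬ P.lt i j) : g i j = (1 : 𝕄) i j :=
  sub_eq_zero.mp (hg i j hij)

theorem mul_apply_of_max {P : PatternPoset n} {m : Fin n} (hm : ∀ x, ¬ P.lt m x) {g : 𝕄}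
    (hg : g - 1 ∈ P.patternAlg F) (X : 𝕄) (j : Fin n) : (g * X) m j = X m j := by
  rw [← one_mul X, ← mul_assoc, mul_one, mul_apply, mul_apply]
  exact Finset.sum_congr rfl fun k _ => by rw [apply_eq_one_apply_of_not_lt hg (hm k)]

theorem coadj_mk (P : PatternPoset n) (g : P.patternGroup F) (Y : 𝕄) :
    P.coadj F g (Submodule.Quotient.mk Y) =
      Submodule.Quotient.mk ((g : 𝕄ˣ) * Y * ((g⁻¹ : 𝕄ˣ) : 𝕄)) :=
  rfl

theorem coadj_mul (P : PatternPoset n) (g h : P.patternGroup F) (X : P.LSpace F) :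
    P.coadj F (g * h) X = P.coadj F g (P.coadj F h X) := by
  obtain ⟨Y, rfl⟩ := Submodule.Quotient.mk_surjective _ X
  simp only [coadj_mk, Subgroup.coe_mul, _root_.mul_inv_rev, Units.val_mul, mul_assoc]

theorem coadj_one (P : PatternPoset n) (X : P.LSpace F) : P.coadj F 1 X = X := by
  obtain ⟨Y, rfl⟩ := Submodule.Quotient.mk_surjective _ X
  simp [coadj_mk]

theorem patternGroup_mono {P Q : PatternPoset n} (hQP : ∀ i j, Q.lt i j → P.lt i j) :
    Q.patternGroup F ≤ P.patternGroup F :=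
  fun _ hg i j hij => hg i j fun h => hij (hQP i j h)

theorem lowQuot_anti {P Q : PatternPoset n} (hQP : ∀ i j, Q.lt i j → P.lt i j) :
    P.lowQuot F ≤ Q.lowQuot F :=
  fun _ hX i j hji => hX i j (hQP j i hji)

noncomputable def quotMap (F : Type*) [Field F] {P Q : PatternPoset n}
    (hQP : ∀ i j, Q.lt i j → P.lt i j) : P.LSpace F →ₗ[F] Q.LSpace F :=
  Submodule.mapQ _ _ LinearMap.id (lowQuot_anti hQP)

theorem quotMap_coadj {P Q : PatternPoset n} (hQP : ∀ i j, Q.lt i j → P.lt i j)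
    (g : Q.patternGroup F) (X : P.LSpace F) :
    quotMap F hQP (P.coadj F (Subgroup.inclusion (patternGroup_mono hQP) g) X) =
      Q.coadj F g (quotMap F hQP X) := by
  obtain ⟨Y, rfl⟩ := Submodule.Quotient.mk_surjective _ X
  rfl

theorem conj_one_add_vecMulVec_single_sub_mem (P : PatternPoset n) {m : Fin n}
    (hm : ∀ x, ¬ P.lt m x) (c : Fin n → F) (X : 𝕄) :
    (1 + vecMulVec c (Pi.single m 1)) * X * (1 - vecMulVec c (Pi.single m 1)) -
      (X + vecMulVec c (X m)) ∈ P.lowQuot F := by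
  intro i j hji
  have hjm : j ≠ m := by rintro rfl; exact hm i hji
  rw [Matrix.sub_apply, conj_one_add_vecMulVec_single_apply c X i hjm, Matrix.add_apply,
    vecMulVec_apply, sub_self]

def colTransvection (P : PatternPoset n) (m : Fin n) (c : Fin n → F)
    (hc : ∀ i, c i ≠ 0 → P.lt i m) : P.patternGroup F :=
  have hcm : c m = 0 := by_contra fun h => P.lt_irrefl m (hc m h)
  ⟨⟨1 + vecMulVec c (Pi.single m 1), 1 - vecMulVec c (Pi.single m 1),
    by
      rw [add_mul, mul_sub, mul_sub, one_mul, mul_one, one_mul, vecMulVec_single_mul_self hcm]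
      abel,
    by
      rw [sub_mul, mul_add, mul_add, one_mul, mul_one, one_mul, vecMulVec_single_mul_self hcm]
      abel⟩,
    fun i j hij => by
      by_cases hjm : j = m
      · subst hjm
        simpa [vecMulVec_apply] using fun h => hij (hc i h)
      · simp [vecMulVec_apply, hjm]⟩

theorem coadj_colTransvection_mk (P : PatternPoset n) {m : Fin n} (hm : ∀ x, ¬ P.lt m x)
    (c : Fin n → F) (hc : ∀ i, c i ≠ 0 → P.lt i m) (Y : 𝕄) :
    P.coadj F (P.colTransvection m c hc) (Submodule.Quotient.mk Y) =
      Submodule.Quotient.mk (Y + vecMulVec c (Y m)) :=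
  (Submodule.Quotient.eq _).mpr (conj_one_add_vecMulVec_single_sub_mem P hm c Y)

end PatternPoset

namespace PosetSystem

open PatternPoset

variable {n : ℕ} (S : PosetSystem n) {F : Type*} [Field F]

local notation "𝕄" => Matrix (Fin n) (Fin n) F

variable (F) in
noncomputable def oneAMat : 𝕄 :=
  ∑ a ∈ S.A, Matrix.single S.m a (1 : F)

theorem oneAMat_apply_m (j : Fin n) : S.oneAMat F S.m j = if j ∈ S.A then 1 else 0 := by
  classical
  simp [oneAMat, Matrix.sum_apply, Matrix.single_apply]

theorem oneAMat_mul_apply_m (X : 𝕄) (j : Fin n) :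
    (S.oneAMat F * X) S.m j = ∑ a ∈ S.A, X a j := by
  simp [oneAMat, Matrix.sum_mul, Matrix.sum_apply, single_mul_apply_same]

theorem mem_stab_iff (g : S.P.patternGroup F) :
    g ∈ S.stab F ↔ (g : 𝕄ˣ) * S.oneAMat F * ((g⁻¹ : 𝕄ˣ) : 𝕄) - S.oneAMat F ∈
      (S.P.restrictTo S.m).lowQuot F :=
  Submodule.Quotient.eq _

theorem mem_fiber_mk_iff (Y : 𝕄) :
    (Submodule.Quotient.mk Y : S.P.LSpace F) ∈ S.fiber F ↔
      Y - S.oneAMat F ∈ (S.P.restrictTo S.m).lowQuot F := by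
  change Submodule.Quotient.mk Y = Submodule.Quotient.mk _ ↔ _
  exact Submodule.Quotient.eq _

theorem apply_m_of_mk_mem_fiber {Y : 𝕄} (hY : (Submodule.Quotient.mk Y : S.P.LSpace F) ∈ S.fiber F)
    {j : Fin n} (hj : S.P.lt j S.m) : Y S.m j = if j ∈ S.A then 1 else 0 := by
  rw [← oneAMat_apply_m, ← sub_eq_zero, ← Matrix.sub_apply]
  exact (S.mem_fiber_mk_iff Y).mp hY S.m j ⟨rfl, hj⟩

theorem coadjQ_mk (g : S.P.patternGroup F) (Y : 𝕄) :
    S.coadjQ F g (Submodule.Quotient.mk Y) =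
      Submodule.Quotient.mk ((g : 𝕄ˣ) * Y * ((g⁻¹ : 𝕄ˣ) : 𝕄)) :=
  rfl

theorem coadjQ_mul (g h : S.P.patternGroup F) (X : (S.P.restrictTo S.m).LSpace F) :
    S.coadjQ F (g * h) X = S.coadjQ F g (S.coadjQ F h X) := by
  obtain ⟨Y, rfl⟩ := Submodule.Quotient.mk_surjective _ X
  simp only [coadjQ_mk, Subgroup.coe_mul, _root_.mul_inv_rev, Units.val_mul, mul_assoc]

theorem one_mem_stab : (1 : S.P.patternGroup F) ∈ S.stab F := by
  simp [stab, oneA, coadjQ_mk]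

theorem mul_mem_stab {g h : S.P.patternGroup F} (hg : g ∈ S.stab F) (hh : h ∈ S.stab F) :
    g * h ∈ S.stab F := by
  simp only [stab, Set.mem_ofPred_eq, coadjQ_mul] at *
  rw [hh, hg]

theorem inv_mem_stab {g : S.P.patternGroup F} (hg : g ∈ S.stab F) : g⁻¹ ∈ S.stab F := by
  have h1 := S.one_mem_stab (F := F)
  simp only [stab, Set.mem_ofPred_eq] at *
  conv_lhs => rw [← hg, ← coadjQ_mul, inv_mul_cancel]
  exact h1

theorem coadj_mem_fiber {g : S.P.patternGroup F} (hg : g ∈ S.stab F) {X : S.P.LSpace F}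
    (hX : X ∈ S.fiber F) : S.P.coadj F g X ∈ S.fiber F := by
  obtain ⟨Y, rfl⟩ := Submodule.Quotient.mk_surjective _ X
  change S.coadjQ F g (S.P.projL S.m F (Submodule.Quotient.mk Y)) = S.oneA F
  rw [hX, hg]

variable (F) in
def orbit (X : S.P.LSpace F) : Set (S.P.LSpace F) :=
  {Y | ∃ g ∈ S.stab F, S.P.coadj F g X = Y}

theorem mem_orbit_self (X : S.P.LSpace F) : X ∈ S.orbit F X :=
  ⟨1, S.one_mem_stab, S.P.coadj_one X⟩

theorem orbit_eq_of_mem {X Y : S.P.LSpace F} (h : Y ∈ S.orbit F X) : S.orbit F Y = S.orbit F X := by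
  obtain ⟨g, hg, rfl⟩ := h
  ext Z
  constructor
  · rintro ⟨k, hk, rfl⟩
    exact ⟨k * g, S.mul_mem_stab hk hg, S.P.coadj_mul k g X⟩
  · rintro ⟨k, hk, rfl⟩
    refine ⟨k * g⁻¹, S.mul_mem_stab hk (S.inv_mem_stab hg), ?_⟩
    rw [S.P.coadj_mul, ← S.P.coadj_mul g⁻¹, inv_mul_cancel, S.P.coadj_one]

theorem systemK_eq_card_image : S.systemK F = Nat.card (S.orbit F '' S.fiber F) :=
  Nat.card_congr <| Equiv.subtypeEquivRight fun _ =>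
    ⟨fun ⟨X, hX, h⟩ => ⟨X, hX, h.symm⟩, fun ⟨X, hX, h⟩ => ⟨X, hX, h.symm⟩⟩

def IsDeleted (a x : Fin n) : Prop :=
  a ∈ S.A ∧ S.P.lt a x ∧ S.P.lt x S.m ∧ ∀ b ∈ S.A, S.P.lt b x → b = a

theorem D_lt_iff {x y : Fin n} : S.D.lt x y ↔ S.P.lt x y ∧ ¬ S.IsDeleted x y := by
  simp only [D, IsDeleted]
  tauto

theorem D_le : ∀ i j, S.DSys.P.lt i j → S.P.lt i j :=
  fun _ _ h => h.1

theorem restrictTo_D : S.DSys.P.restrictTo S.DSys.m = S.P.restrictTo S.m :=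
  PatternPoset.ext <| funext₂ fun _ y =>
    propext ⟨fun h => ⟨h.1, h.2.1⟩, fun ⟨hy, h⟩ => ⟨hy, h, fun hd => S.P.lt_irrefl y (hy ▸ hd.2.1)⟩⟩

theorem inv_apply_eq_zero_of_isDeleted {g : S.P.patternGroup F} (hg : g ∈ S.stab F) {a w : Fin n}
    (h : S.IsDeleted a w) : ((g⁻¹ : 𝕄ˣ) : 𝕄) a w = 0 := by
  obtain ⟨ha, haw, hwm, huniq⟩ := h
  have hwA : w ∉ S.A := fun hw => S.A_anti a ha w hw haw
  have hv : ((g⁻¹ : 𝕄ˣ) : 𝕄) - 1 ∈ S.P.patternAlg F := inv_sub_one_mem g.2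
  have hrow : ∑ b ∈ S.A, ((g⁻¹ : 𝕄ˣ) : 𝕄) b w = 0 := by
    have h := (S.mem_stab_iff g).mp hg S.m w ⟨rfl, hwm⟩
    rwa [Matrix.sub_apply, mul_assoc, mul_apply_of_max S.m_max g.2, oneAMat_mul_apply_m,
      oneAMat_apply_m, if_neg hwA, sub_zero] at h
  rwa [Finset.sum_eq_single_of_mem a ha fun b hb hba => by
    rw [apply_eq_one_apply_of_not_lt hv fun hbw => hba (huniq b hb hbw),
      one_apply_ne fun hbw => hwA (by rwa [← hbw])]] at hrow

theorem sub_one_mem_D_of_mem_stab {g : S.P.patternGroup F} (hg : g ∈ S.stab F) :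
    ((g : 𝕄ˣ) : 𝕄) - 1 ∈ S.D.patternAlg F := by
  intro i j hij
  by_cases hP : S.P.lt i j
  · have hdel : S.IsDeleted i j := by_contra fun h => hij (S.D_lt_iff.mpr ⟨hP, h⟩)
    have := S.inv_apply_eq_zero_of_isDeleted (S.inv_mem_stab hg) hdel
    rw [Matrix.sub_apply, one_apply_ne (S.P.ne_of_lt hP), sub_zero, ← this]
    rfl
  · exact g.2 i j hP

theorem inclusion_mem_stab_iff (g : S.DSys.P.patternGroup F) :
    Subgroup.inclusion (patternGroup_mono S.D_le) g ∈ S.stab F ↔ g ∈ S.DSys.stab F := by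
  rw [mem_stab_iff, mem_stab_iff, S.restrictTo_D]
  rfl

open Classical in
noncomputable def deletedCol (Δ : 𝕄) (x : Fin n) : F :=
  ∑ a ∈ S.A with S.IsDeleted a x, Δ x a

theorem deletedCol_eq (Δ : 𝕄) {a x : Fin n} (h : S.IsDeleted a x) : S.deletedCol Δ x = Δ x a := by
  classical
  refine Finset.sum_eq_single_of_mem a (Finset.mem_filter.mpr ⟨h.1, h⟩) fun b hb hba => ?_
  exact absurd (h.2.2.2 b (Finset.mem_filter.mp hb).1 (Finset.mem_filter.mp hb).2.2.1) hba

theorem exists_isDeleted_of_deletedCol_ne_zero {Δ : 𝕄} {x : Fin n} (h : S.deletedCol Δ x ≠ 0) :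
    ∃ a, S.IsDeleted a x := by
  classical
  obtain ⟨a, ha, -⟩ := Finset.exists_ne_zero_of_sum_ne_zero h
  exact ⟨a, (Finset.mem_filter.mp ha).2⟩

theorem colTransvection_mem_stab (c : Fin n → F) (hc : ∀ i, c i ≠ 0 → S.P.lt i S.m) :
    S.P.colTransvection S.m c hc ∈ S.stab F := by
  have hQ := conj_one_add_vecMulVec_single_sub_mem (S.P.restrictTo S.m)
    (fun x h => S.m_max x h.2) c (S.oneAMat F)
  have hcol : vecMulVec c (S.oneAMat F S.m) ∈ (S.P.restrictTo S.m).lowQuot F := by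
    rintro i j ⟨rfl, -⟩
    rw [vecMulVec_apply, by_contra fun h => S.P.lt_irrefl _ (hc _ h), zero_mul]
  rw [mem_stab_iff]
  convert add_mem hQ hcol using 1
  change (1 + vecMulVec c (Pi.single S.m 1)) * S.oneAMat F * (1 - vecMulVec c (Pi.single S.m 1)) -
    S.oneAMat F = _
  abel

theorem exists_mem_stab_coadj_mk_eq {Y Δ : 𝕄}
    (hY : (Submodule.Quotient.mk Y : S.P.LSpace F) ∈ S.fiber F) (hΔ : Δ ∈ S.D.lowQuot F) :
    ∃ g ∈ S.stab F, S.P.coadj F g (Submodule.Quotient.mk Y) = Submodule.Quotient.mk (Y + Δ) := by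
  have hc : ∀ i, S.deletedCol Δ i ≠ 0 → S.P.lt i S.m := fun _ h =>
    (S.exists_isDeleted_of_deletedCol_ne_zero h).elim fun _ hd => hd.2.2.1
  refine ⟨_, S.colTransvection_mem_stab _ hc, ?_⟩
  rw [coadj_colTransvection_mk S.P S.m_max, Submodule.Quotient.eq]
  intro i j hji
  rw [Matrix.sub_apply, Matrix.add_apply, Matrix.add_apply, add_sub_add_left_eq_sub,
    vecMulVec_apply, sub_eq_zero]
  by_cases hdel : S.IsDeleted j i
  · rw [S.deletedCol_eq Δ hdel, S.apply_m_of_mk_mem_fiber hY (S.P.lt_trans hji hdel.2.2.1),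
      if_pos hdel.1, mul_one]
  rw [hΔ i j (S.D_lt_iff.mpr ⟨hji, hdel⟩)]
  by_contra hne
  obtain ⟨a, ha⟩ := S.exists_isDeleted_of_deletedCol_ne_zero (left_ne_zero_of_mul hne)
  have hjA : j ∈ S.A := by
    by_contra hjA
    rw [S.apply_m_of_mk_mem_fiber hY (S.P.lt_trans hji ha.2.2.1), if_neg hjA, mul_zero] at hne
    exact hne rfl
  exact hdel (ha.2.2.2 j hjA hji ▸ ha)

theorem image_quotMap_orbit (X : S.P.LSpace F) :
    quotMap F S.D_le '' S.orbit F X = S.DSys.orbit F (quotMap F S.D_le X) := by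
  ext Z
  constructor
  · rintro ⟨-, ⟨g, hg, rfl⟩, rfl⟩
    let g' : S.DSys.P.patternGroup F := ⟨g, S.sub_one_mem_D_of_mem_stab hg⟩
    exact ⟨g', (S.inclusion_mem_stab_iff g').mp hg, (quotMap_coadj S.D_le g' X).symm⟩
  · rintro ⟨g, hg, rfl⟩
    exact ⟨_, ⟨_, (S.inclusion_mem_stab_iff g).mpr hg, rfl⟩, quotMap_coadj S.D_le g X⟩

theorem mk_mem_fiber_DSys_iff (Y : 𝕄) :
    (Submodule.Quotient.mk Y : S.DSys.P.LSpace F) ∈ S.DSys.fiber F ↔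
      (Submodule.Quotient.mk Y : S.P.LSpace F) ∈ S.fiber F := by
  rw [mem_fiber_mk_iff, mem_fiber_mk_iff, S.restrictTo_D]
  rfl

theorem image_quotMap_fiber : quotMap F S.D_le '' S.fiber F = S.DSys.fiber F := by
  ext W
  obtain ⟨Y, rfl⟩ := Submodule.Quotient.mk_surjective _ W
  refine ⟨?_, fun h => ⟨_, (S.mk_mem_fiber_DSys_iff Y).mp h, rfl⟩⟩
  rintro ⟨X, hX, hXY⟩
  obtain ⟨Y', rfl⟩ := Submodule.Quotient.mk_surjective _ X
  rw [← hXY]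
  exact (S.mk_mem_fiber_DSys_iff Y').mpr hX

theorem mem_orbit_of_quotMap_eq {X₁ X₂ : S.P.LSpace F} (hX₁ : X₁ ∈ S.fiber F)
    (h : quotMap F S.D_le X₁ = quotMap F S.D_le X₂) : X₂ ∈ S.orbit F X₁ := by
  obtain ⟨Y₁, rfl⟩ := Submodule.Quotient.mk_surjective _ X₁
  obtain ⟨Y₂, rfl⟩ := Submodule.Quotient.mk_surjective _ X₂
  have hΔ : Y₂ - Y₁ ∈ S.D.lowQuot F := by
    rw [← neg_sub]
    exact neg_mem ((Submodule.Quotient.eq _).mp h)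
  obtain ⟨g, hg, hgY⟩ := S.exists_mem_stab_coadj_mk_eq hX₁ hΔ
  exact ⟨g, hg, by rw [hgY, add_sub_cancel]⟩

theorem injOn_image_quotMap :
    Set.InjOn (Set.image (quotMap F S.D_le)) (S.orbit F '' S.fiber F) := by
  rintro - ⟨X₁, hX₁, rfl⟩ - ⟨X₂, -, rfl⟩ h
  rw [image_quotMap_orbit, image_quotMap_orbit] at h
  obtain ⟨Z, hZ, hZX₂⟩ : quotMap F S.D_le X₂ ∈ quotMap F S.D_le '' S.orbit F X₁ := by
    rw [image_quotMap_orbit, h]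
    exact S.DSys.mem_orbit_self _
  have hZfib : Z ∈ S.fiber F := by
    obtain ⟨g, hg, rfl⟩ := hZ
    exact S.coadj_mem_fiber hg hX₁
  rw [← S.orbit_eq_of_mem hZ, S.orbit_eq_of_mem (S.mem_orbit_of_quotMap_eq hZfib hZX₂)]

theorem image_image_quotMap_orbit :
    Set.image (quotMap F S.D_le) '' (S.orbit F '' S.fiber F) =
      S.DSys.orbit F '' S.DSys.fiber F := by
  rw [Set.image_image, Set.image_congr fun X _ => S.image_quotMap_orbit X, ← Set.image_image,
    image_quotMap_fiber]

end PosetSystem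

theorem systemK_D_general (n : ℕ) (S : PosetSystem n)
    (F : Type) [Field F] :
    S.systemK F = S.DSys.systemK F := by
  rw [S.systemK_eq_card_image, S.DSys.systemK_eq_card_image, ← S.image_image_quotMap_orbit,
    Nat.card_image_of_injOn S.injOn_image_quotMap]

/-- **Lemma 4.6**: for every poset system `S = (P, m, A)`,
`k(P, m, A; q) = k(D(S), m, A; q)`. -/
theorem systemK_D (n : ℕ) (S : PosetSystem n)
    (F : Type) [Field F] [Fintype F] (hq : IsPrimePow (Fintype.card F)) :
    S.systemK F = S.DSys.systemK F :=
  systemK_D_general n S F
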